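/- arXiv:2110.04763 — 3 statements merged into one kernel-verified Lean document; each statement's English description precedes it below -/
import Mathlib

section
/- Let F ⊆ ℝ^Ω be a function class closed under the operation f, g ↦ (f−g)/2. Then for every γ > 0, the γ-fat-shattering dimension of F equals the γ-fat-shattering dimension at 0 of F. That is, any set γ-shattered by F with some witness shift r is also γ-shattered with witness r ≡ 0. -/
/-! If `f` realizes a sign pattern `y` around `r` and `g` realizes the opposite pattern `!y`,
then `(f - g) / 2` realizes `y` around `0` with the same margin: the shift `r` cancels. -/

/-- `S` is `γ`-shattered by `F` with witness shift `r`. -/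
def ShatteredWith {Ω : Type*} (F : Set (Ω → ℝ)) (γ : ℝ) (S : Finset Ω)
    (r : Ω → ℝ) : Prop :=
  ∀ y : Ω → Bool, ∃ f ∈ F, ∀ x ∈ S,
    (if y x then (1 : ℝ) else -1) * (f x - r x) ≥ γ

lemma half_sub_margin {s a b r γ : ℝ} (ha : s * (a - r) ≥ γ) (hb : -s * (b - r) ≥ γ) :
    s * ((a - b) / 2) ≥ γ := by
  have key : s * ((a - b) / 2) = (s * (a - r) + -s * (b - r)) / 2 := by ring
  linarith

lemma sign_not (b : Bool) :
    (if !b then (1 : ℝ) else -1) = -(if b then (1 : ℝ) else -1) := by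
  cases b <;> norm_num

theorem ShatteredWith.zero_of_halfSub_mem {Ω : Type*} {F : Set (Ω → ℝ)} {γ : ℝ}
    {S : Finset Ω} {r : Ω → ℝ}
    (hF : ∀ f ∈ F, ∀ g ∈ F, (fun x => (f x - g x) / 2) ∈ F) (h : ShatteredWith F γ S r) :
    ShatteredWith F γ S 0 := by
  intro y
  obtain ⟨f, hf, hfy⟩ := h y
  obtain ⟨g, hg, hgy⟩ := h (fun x => !y x)
  refine ⟨_, hF f hf g hg, fun x hx => ?_⟩
  have hgx := hgy x hx
  rw [sign_not] at hgx
  simpa only [Pi.zero_apply, sub_zero] using half_sub_margin (hfy x hx) hgx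

theorem shattered_iff_shattered_at_zero_general {Ω : Type*} (F : Set (Ω → ℝ))
    (hF : ∀ f ∈ F, ∀ g ∈ F, (fun x => (f x - g x) / 2) ∈ F)
    (γ : ℝ) (S : Finset Ω) :
    (∃ r : Ω → ℝ, ShatteredWith F γ S r) ↔ ShatteredWith F γ S 0 :=
  ⟨fun ⟨_, h⟩ => h.zero_of_halfSub_mem hF, fun h => ⟨0, h⟩⟩

theorem shattered_iff_shattered_at_zero {Ω : Type*} (F : Set (Ω → ℝ))
    (hF : ∀ f ∈ F, ∀ g ∈ F, (fun x => (f x - g x) / 2) ∈ F)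
    (γ : ℝ) (hγ : 0 < γ) (S : Finset Ω) :
    (∃ r : Ω → ℝ, ShatteredWith F γ S r) ↔ ShatteredWith F γ S 0 :=
  shattered_iff_shattered_at_zero_general F hF γ S
end

section
/- Let F = {x ↦ w·x + b : ‖w‖ ≤ R, b ∈ ℝ} be the class of R-semi-bounded affine functions on the unit ball B of ℝ^d. Then for 0 < γ ≤ R, the γ-fat-shattering dimension of F is at most (3R/γ)². -/
open RealInnerProductSpace

section FatAux
open Finset


section aux
variable {ι : Type*} [Fintype ι] [DecidableEq ι]

noncomputable def eps (y : ι → Bool) (i : ι) : ℝ := if y i then 1 else -1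

lemma eps_mul_self (y : ι → Bool) (i : ι) : eps y i * eps y i = 1 := by
  unfold eps; cases y i <;> norm_num

lemma sum_eps_mul (a b : ι) (hab : a ≠ b) :
    ∑ y : ι → Bool, eps y a * eps y b = 0 := by
  apply Finset.sum_ninvolution (fun y => Function.update y a (!y a))
  · intro y
    have h1 : Function.update y a (!y a) a = !y a := Function.update_self _ _ _
    have h2 : Function.update y a (!y a) b = y b := Function.update_of_ne hab.symm _ _
    unfold eps
    rw [h1, h2]
    cases y a <;> cases y b <;> norm_num
  · intro y _
    intro h
    have := congrFun h a
    rw [Function.update_self] at this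
    cases hya : y a <;> rw [hya] at this <;> simp at this
  · intro y; exact Finset.mem_univ _
  · intro y
    funext i
    by_cases hi : i = a
    · subst hi; simp [Function.update_self]
    · rw [Function.update_of_ne hi, Function.update_of_ne hi]

variable {E : Type*} [NormedAddCommGroup E] [InnerProductSpace ℝ E]

lemma sum_norm_sq_rand (v : ι → E) :
    ∑ y : ι → Bool, ‖∑ i, eps y i • v i‖ ^ 2
      = 2 ^ (Fintype.card ι) * ∑ i, ‖v i‖ ^ 2 := by
  have expand : ∀ y : ι → Bool, ‖∑ i, eps y i • v i‖ ^ 2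
      = ∑ i, ∑ j, (eps y i * eps y j) * ⟪v i, v j⟫ := by
    intro y
    rw [← real_inner_self_eq_norm_sq, sum_inner]
    refine Finset.sum_congr rfl fun i _ => ?_
    rw [inner_sum]
    refine Finset.sum_congr rfl fun j _ => ?_
    rw [real_inner_smul_left, real_inner_smul_right]
    ring
  simp_rw [expand]
  rw [Finset.sum_comm]
  have : ∀ i : ι, ∑ y : ι → Bool, ∑ j, (eps y i * eps y j) * ⟪v i, v j⟫
      = 2 ^ (Fintype.card ι) * ‖v i‖ ^ 2 := by
    intro i
    rw [Finset.sum_comm]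
    have : ∀ j : ι, ∑ y : ι → Bool, (eps y i * eps y j) * ⟪v i, v j⟫
        = (if i = j then (2:ℝ) ^ (Fintype.card ι) * ‖v i‖^2 else 0) := by
      intro j
      rw [← Finset.sum_mul]
      by_cases hij : i = j
      · subst hij
        simp_rw [eps_mul_self]
        rw [Finset.sum_const, real_inner_self_eq_norm_sq]
        simp [Fintype.card_fun]
      · rw [sum_eps_mul i j hij, if_neg hij, zero_mul]
    simp_rw [this]
    simp
  simp_rw [this]
  rw [Finset.mul_sum]
end aux
end FatAux


set_option maxHeartbeats 1000000 in
theorem fat_semibounded_affine_le {d : ℕ} (R γ : ℝ) (hR : 0 < R)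
    (hγ : 0 < γ) (hγR : γ ≤ R)
    (F : Set (EuclideanSpace ℝ (Fin d) → ℝ))
    (hF : F = {f | ∃ (w : EuclideanSpace ℝ (Fin d)) (b : ℝ),
      ‖w‖ ≤ R ∧ f = fun x => ⟪w, x⟫ + b})
    (S : Finset (EuclideanSpace ℝ (Fin d))) (hS : ∀ x ∈ S, ‖x‖ ≤ 1)
    (hshat : ∃ r, ShatteredWith F γ S r) :
    (S.card : ℝ) ≤ (3 * R / γ) ^ 2 := by
  classical
  have hRγ : (1:ℝ) ≤ R / γ := (one_le_div hγ).2 hγR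
  have h33 : 3 * R / γ = 3 * (R / γ) := by ring
  have h9 : (9:ℝ) ≤ (3 * R / γ) ^ 2 := by rw [h33]; nlinarith
  by_cases hk9 : (S.card : ℝ) ≤ 9
  · linarith
  push_neg at hk9
  obtain ⟨r, hr⟩ := hshat
  set k : ℕ := S.card with hkdef
  set T : (↥S → Bool) → EuclideanSpace ℝ (Fin d) :=
    fun y => ∑ i : ↥S, eps y i • (i : EuclideanSpace ℝ (Fin d)) with hT
  set sg : (↥S → Bool) → ℝ := fun y => ∑ i : ↥S, eps y i with hsg
  have hcard : Fintype.card ↥S = k := Fintype.card_coe S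
  -- existence of a good sign pattern
  have h1 : ∑ y : ↥S → Bool, ‖T y‖ ^ 2
      = 2 ^ k * ∑ i : ↥S, ‖(i : EuclideanSpace ℝ (Fin d))‖ ^ 2 := by
    rw [hT]
    simpa [hcard] using
      sum_norm_sq_rand (fun i : ↥S => (i : EuclideanSpace ℝ (Fin d)))
  have h2 : ∑ y : ↥S → Bool, (sg y) ^ 2 = 2 ^ k * k := by
    have h := sum_norm_sq_rand (fun _ : ↥S => (1:ℝ))
    simpa [hsg, hcard, Real.norm_eq_abs, sq_abs] using h
  have hnormle : ∑ i : ↥S, ‖(i : EuclideanSpace ℝ (Fin d))‖ ^ 2 ≤ (k : ℝ) := by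
    calc ∑ i : ↥S, ‖(i : EuclideanSpace ℝ (Fin d))‖ ^ 2
        ≤ ∑ _i : ↥S, (1:ℝ) := by
          refine Finset.sum_le_sum fun i _ => ?_
          have := hS i i.2
          nlinarith [norm_nonneg (i : EuclideanSpace ℝ (Fin d))]
      _ = (k : ℝ) := by simp [hcard, hkdef]
  have hsumle : ∑ y : ↥S → Bool, (‖T y‖ ^ 2 + (sg y) ^ 2)
      ≤ ∑ _y : ↥S → Bool, (2 * (k:ℝ)) := by
    rw [Finset.sum_add_distrib, h1, h2, Finset.sum_const]
    have hcf : Fintype.card (↥S → Bool) = 2 ^ k := by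
      rw [Fintype.card_fun, Fintype.card_bool, hcard]
    rw [Finset.card_univ, hcf, nsmul_eq_mul]
    have h2k : (0:ℝ) ≤ 2 ^ k := by positivity
    have := mul_nonneg h2k (sub_nonneg.2 hnormle)
    push_cast
    push_cast at this
    linarith
  obtain ⟨y₀, -, hy₀⟩ := Finset.exists_le_of_sum_le
    (Finset.univ_nonempty (α := ↥S → Bool)) hsumle
  -- y₀ takes both values
  have hs2 : (sg y₀) ^ 2 ≤ 2 * k := by linarith [sq_nonneg ‖T y₀‖]
  have hex_true : ∃ i : ↥S, y₀ i = true := by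
    by_contra h
    push_neg at h
    have hall : ∀ i : ↥S, y₀ i = false := fun i => by
      cases hyi : y₀ i
      · rfl
      · exact absurd hyi (h i)
    have : sg y₀ = -(k : ℝ) := by
      rw [hsg]
      have : ∀ i : ↥S, eps y₀ i = -1 := fun i => by
        unfold eps; rw [hall i]; rfl
      simp [this, hcard, hkdef]
    rw [this, neg_sq] at hs2
    linarith [mul_pos (by linarith : (0:ℝ) < (k:ℝ) - 2) (by linarith : (0:ℝ) < (k:ℝ)),
      sq_abs (k:ℝ), sq ((k:ℝ)) ▸ (by nlinarith : ((k:ℝ))^2 > 2 * k)]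
  have hex_false : ∃ i : ↥S, y₀ i = false := by
    by_contra h
    push_neg at h
    have hall : ∀ i : ↥S, y₀ i = true := fun i => by
      cases hyi : y₀ i
      · exact absurd hyi (h i)
      · rfl
    have : sg y₀ = (k : ℝ) := by
      rw [hsg]
      have : ∀ i : ↥S, eps y₀ i = 1 := fun i => by
        unfold eps; rw [hall i]; rfl
      simp [this, hcard, hkdef]
    rw [this] at hs2
    nlinarith [hs2, hk9]
  -- get the two affine functions
  set yh : EuclideanSpace ℝ (Fin d) → Bool :=
    fun x => if h : x ∈ S then y₀ ⟨x, h⟩ else true with hyh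
  obtain ⟨f₁, hf₁F, hf₁⟩ := hr yh
  obtain ⟨f₂, hf₂F, hf₂⟩ := hr (fun x => !(yh x))
  rw [hF] at hf₁F hf₂F
  obtain ⟨w₁, b₁, hw₁, rfl⟩ := hf₁F
  obtain ⟨w₂, b₂, hw₂, rfl⟩ := hf₂F
  set v := w₁ - w₂ with hv
  set c := b₁ - b₂ with hc
  have hyhi : ∀ i : ↥S, yh (i : EuclideanSpace ℝ (Fin d)) = y₀ i := by
    intro i
    rw [hyh]
    simp [i.2]
  have key : ∀ i : ↥S, 2 * γ ≤ eps y₀ i * (⟪v, (i : EuclideanSpace ℝ (Fin d))⟫ + c) := by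
    intro i
    have h1 := hf₁ i i.2
    have h2 := hf₂ i i.2
    rw [hyhi i] at h1
    simp only [hyhi i] at h2
    have hin : ⟪v, (i : EuclideanSpace ℝ (Fin d))⟫
        = ⟪w₁, (i : EuclideanSpace ℝ (Fin d))⟫ - ⟪w₂, (i : EuclideanSpace ℝ (Fin d))⟫ := by
      rw [hv, inner_sub_left]
    cases hyi : y₀ i
    · rw [hyi] at h1 h2
      rw [Bool.not_false] at h2
      rw [if_neg Bool.false_ne_true] at h1
      rw [if_pos rfl] at h2
      simp only [neg_one_mul, one_mul, ge_iff_le] at h1 h2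
      have he : eps y₀ i = -1 := by unfold eps; rw [hyi]; norm_num
      rw [he, hin, hc]
      nlinarith
    · rw [hyi] at h1 h2
      rw [Bool.not_true] at h2
      rw [if_pos rfl] at h1
      rw [if_neg Bool.false_ne_true] at h2
      simp only [neg_one_mul, one_mul, ge_iff_le] at h1 h2
      have he : eps y₀ i = 1 := by unfold eps; rw [hyi]; norm_num
      rw [he, hin, hc]
      nlinarith
  -- sum the key inequality
  have hsumkey : 2 * (k:ℝ) * γ ≤ ⟪v, T y₀⟫ + c * sg y₀ := by
    have hl : ∑ _i : ↥S, (2 * γ) = 2 * (k:ℝ) * γ := by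
      rw [Finset.sum_const, Finset.card_univ, hcard, nsmul_eq_mul]
      push_cast
      ring
    have hsum := Finset.sum_le_sum (fun i (_ : i ∈ Finset.univ) => key i)
    rw [hl] at hsum
    have hsplit : ∑ i : ↥S, eps y₀ i * (⟪v, (i : EuclideanSpace ℝ (Fin d))⟫ + c)
        = ⟪v, T y₀⟫ + c * sg y₀ := by
      simp_rw [mul_add]
      rw [Finset.sum_add_distrib]
      congr 1
      · rw [hT, inner_sum]
        exact Finset.sum_congr rfl fun i _ => (real_inner_smul_right _ _ _).symm
      · rw [hsg, Finset.mul_sum]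
        exact Finset.sum_congr rfl fun i _ => mul_comm _ _
    rw [hsplit] at hsum
    exact hsum
  -- norm bounds
  have hvn : ‖v‖ ≤ 2 * R := by
    rw [hv]
    calc ‖w₁ - w₂‖ ≤ ‖w₁‖ + ‖w₂‖ := norm_sub_le _ _
      _ ≤ 2 * R := by linarith
  have hinner : ⟪v, T y₀⟫ ≤ 2 * R * ‖T y₀‖ := by
    calc ⟪v, T y₀⟫ ≤ ‖v‖ * ‖T y₀‖ := real_inner_le_norm v (T y₀)
      _ ≤ 2 * R * ‖T y₀‖ := by nlinarith [norm_nonneg (T y₀)]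
  have hip : ∀ i : ↥S, |⟪v, (i : EuclideanSpace ℝ (Fin d))⟫| ≤ 2 * R := by
    intro i
    calc |⟪v, (i : EuclideanSpace ℝ (Fin d))⟫|
        ≤ ‖v‖ * ‖(i : EuclideanSpace ℝ (Fin d))‖ := abs_real_inner_le_norm _ _
      _ ≤ 2 * R := by nlinarith [hS i i.2, norm_nonneg (i : EuclideanSpace ℝ (Fin d)), norm_nonneg v]
  have hcabs : |c| ≤ 2 * R := by
    obtain ⟨a, ha⟩ := hex_true
    obtain ⟨b, hb⟩ := hex_false
    have ka := key a
    have kb := key b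
    have hea : eps y₀ a = 1 := by unfold eps; rw [ha]; rfl
    have heb : eps y₀ b = -1 := by unfold eps; rw [hb]; rfl
    rw [hea] at ka
    rw [heb] at kb
    have hipa := abs_le.1 (hip a)
    have hipb := abs_le.1 (hip b)
    rw [abs_le]
    constructor <;> linarith
  have hcs : c * sg y₀ ≤ 2 * R * |sg y₀| := by
    calc c * sg y₀ ≤ |c * sg y₀| := le_abs_self _
      _ = |c| * |sg y₀| := abs_mul _ _
      _ ≤ 2 * R * |sg y₀| := by nlinarith [abs_nonneg (sg y₀)]
  -- combine
  have hkpos : (0:ℝ) < k := by linarith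
  have hsqk : Real.sqrt k ^ 2 = (k:ℝ) := Real.sq_sqrt hkpos.le
  have hsqknn : 0 ≤ Real.sqrt (k:ℝ) := Real.sqrt_nonneg _
  have hTs : ‖T y₀‖ + |sg y₀| ≤ 2 * Real.sqrt k := by
    nlinarith [sq_nonneg (‖T y₀‖ - |sg y₀|), sq_abs (sg y₀),
      norm_nonneg (T y₀), abs_nonneg (sg y₀),
      sq_nonneg (‖T y₀‖ + |sg y₀| - 2 * Real.sqrt k)]
  have hfinal : 2 * (k:ℝ) * γ ≤ 4 * R * Real.sqrt k := by
    calc 2 * (k:ℝ) * γ ≤ ⟪v, T y₀⟫ + c * sg y₀ := hsumkey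
      _ ≤ 2 * R * ‖T y₀‖ + 2 * R * |sg y₀| := by linarith
      _ = 2 * R * (‖T y₀‖ + |sg y₀|) := by ring
      _ ≤ 2 * R * (2 * Real.sqrt k) := by nlinarith
      _ = 4 * R * Real.sqrt k := by ring
  have htγ : Real.sqrt k * γ ≤ 2 * R := by
    have hsqkpos : 0 < Real.sqrt (k:ℝ) := Real.sqrt_pos.2 hkpos
    nlinarith
  have hk4 : (k:ℝ) ≤ (2 * (R/γ)) ^ 2 := by
    have ht : Real.sqrt k ≤ 2 * (R/γ) := by
      rw [mul_div_assoc'] at *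
      rw [le_div_iff₀ hγ]
      linarith
    nlinarith
  rw [h33]
  nlinarith [sq_nonneg (R/γ), div_nonneg hR.le hγ.le]
end

section
/- Let x_1,…,x_k be vectors in ℝ^d with ‖x_i‖ ≤ 1, let R > 0, and suppose that for every sign vector y ∈ {−1,1}^k there exist w ∈ ℝ^d with ‖w‖ ≤ R and b ∈ ℝ with |b| ≤ 2R such that y_i(w·x_i + b) ≥ γ for all i ∈ [k]. Then kγ ≤ 3R√k, i.e., k ≤ (3R/γ)². -/
open RealInnerProductSpace

open Finset in
private lemma sign_orth {k : ℕ} (i j : Fin k) (hij : i ≠ j) :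
    ∑ y : Fin k → Bool, ((if y i then (1:ℝ) else -1) * (if y j then (1:ℝ) else -1)) = 0 := by
  classical
  apply Finset.sum_ninvolution (fun y => Function.update y i (!(y i)))
  · intro y
    rw [Function.update_self, Function.update_of_ne hij.symm]
    cases y i <;> cases y j <;> norm_num
  · intro y _
    intro hcon
    have := congrFun hcon i
    simp at this
  · intro y; exact Finset.mem_univ _
  · intro y
    funext m
    by_cases hm : m = i
    · subst hm; simp
    · simp [Function.update_of_ne hm]

open Finset in
private lemma sign_sq {k : ℕ} (i : Fin k) :
    ∑ y : Fin k → Bool, ((if y i then (1:ℝ) else -1) * (if y i then (1:ℝ) else -1)) = 2^k := by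
  classical
  have : ∀ y : Fin k → Bool, ((if y i then (1:ℝ) else -1) * (if y i then (1:ℝ) else -1)) = 1 := by
    intro y; cases y i <;> norm_num
  simp only [this, Finset.sum_const, Finset.card_univ, Fintype.card_fun, Fintype.card_bool,
    Fintype.card_fin, nsmul_eq_mul, mul_one]
  push_cast
  ring

theorem margin_signs_card_bound {d k : ℕ} (R γ : ℝ) (hR : 0 < R) (hγ : 0 < γ)
    (x : Fin k → EuclideanSpace ℝ (Fin d)) (hx : ∀ i, ‖x i‖ ≤ 1)
    (h : ∀ y : Fin k → Bool, ∃ (w : EuclideanSpace ℝ (Fin d)) (b : ℝ),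
      ‖w‖ ≤ R ∧ |b| ≤ 2 * R ∧
      ∀ i, (if y i then (1 : ℝ) else -1) * (⟪w, x i⟫ + b) ≥ γ) :
    (k : ℝ) * γ ≤ 3 * R * Real.sqrt k := by
  classical
  set ε : Bool → ℝ := fun b => if b then (1:ℝ) else -1 with hε
  set S : (Fin k → Bool) → EuclideanSpace ℝ (Fin d) := fun y => ∑ i, ε (y i) • x i with hS
  set T : (Fin k → Bool) → ℝ := fun y => ∑ i, ε (y i) with hT
  -- pointwise bound
  have step1 : ∀ y : Fin k → Bool, (k : ℝ) * γ ≤ R * ‖S y‖ + 2 * R * |T y| := by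
    intro y
    obtain ⟨w, b, hw, hb, hyb⟩ := h y
    have h1 : (k : ℝ) * γ ≤ ∑ i, ε (y i) * (⟪w, x i⟫ + b) := by
      calc (k : ℝ) * γ = ∑ _i : Fin k, γ := by simp [mul_comm]
        _ ≤ _ := Finset.sum_le_sum fun i _ => hyb i
    have h2 : ∑ i, ε (y i) * (⟪w, x i⟫ + b) = ⟪w, S y⟫ + b * T y := by
      simp only [hS, hT, inner_sum, real_inner_smul_right, Finset.mul_sum, Finset.sum_add_distrib,
        mul_add]
      congr 1
      exact Finset.sum_congr rfl fun i _ => mul_comm _ _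
    have h3 : ⟪w, S y⟫ ≤ R * ‖S y‖ := by
      calc ⟪w, S y⟫ ≤ ‖w‖ * ‖S y‖ := real_inner_le_norm _ _
        _ ≤ R * ‖S y‖ := by gcongr
    have h4 : b * T y ≤ 2 * R * |T y| := by
      calc b * T y ≤ |b * T y| := le_abs_self _
        _ = |b| * |T y| := abs_mul _ _
        _ ≤ 2 * R * |T y| := by gcongr
    linarith [h1, h2 ▸ h1]
  -- second moment identities
  have sumS2 : ∑ y : Fin k → Bool, ‖S y‖^2 ≤ (2:ℝ)^k * k := by
    have : ∀ y : Fin k → Bool, ‖S y‖^2 = ∑ i, ∑ j, ε (y i) * ε (y j) * ⟪x i, x j⟫ := by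
      intro y
      rw [← real_inner_self_eq_norm_sq]
      simp only [hS, inner_sum, sum_inner, real_inner_smul_left, real_inner_smul_right]
      rw [Finset.sum_comm]
      refine Finset.sum_congr rfl fun i _ => Finset.sum_congr rfl fun j _ => by ring
    simp only [this]
    rw [Finset.sum_comm]
    have key : ∀ i : Fin k, ∑ y : Fin k → Bool, ∑ j, ε (y i) * ε (y j) * ⟪x i, x j⟫
        = (2:ℝ)^k * ⟪x i, x i⟫ := by
      intro i
      rw [Finset.sum_comm]
      have : ∀ j : Fin k, ∑ y : Fin k → Bool, ε (y i) * ε (y j) * ⟪x i, x j⟫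
          = (if i = j then (2:ℝ)^k else 0) * ⟪x i, x j⟫ := by
        intro j
        rw [← Finset.sum_mul]
        congr 1
        by_cases hij : i = j
        · subst hij; simpa [hε] using sign_sq (k := k) i
        · simpa [hij, hε] using sign_orth i j hij
      simp only [this]
      simp [ite_mul]
    calc ∑ i : Fin k, ∑ y : Fin k → Bool, ∑ j, ε (y i) * ε (y j) * ⟪x i, x j⟫
        = ∑ i : Fin k, (2:ℝ)^k * ⟪x i, x i⟫ := Finset.sum_congr rfl fun i _ => key i
      _ = (2:ℝ)^k * ∑ i, ⟪x i, x i⟫ := by rw [Finset.mul_sum]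
      _ ≤ (2:ℝ)^k * k := by
          have hb : ∀ i : Fin k, ⟪x i, x i⟫ ≤ (1:ℝ) := by
            intro i
            rw [real_inner_self_eq_norm_sq]
            nlinarith [hx i, norm_nonneg (x i)]
          have hsum : ∑ i : Fin k, ⟪x i, x i⟫ ≤ (k : ℝ) :=
            le_trans (Finset.sum_le_sum fun i _ => hb i) (by simp)
          have h2k : (0:ℝ) ≤ (2:ℝ)^k := by positivity
          exact mul_le_mul_of_nonneg_left hsum h2k
  have sumT2 : ∑ y : Fin k → Bool, (T y)^2 ≤ (2:ℝ)^k * k := by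
    have : ∀ y : Fin k → Bool, (T y)^2 = ∑ i, ∑ j, ε (y i) * ε (y j) := by
      intro y
      simp only [hT, sq, Finset.sum_mul_sum]
    simp only [this]
    refine le_of_eq ?_
    rw [Finset.sum_comm]
    have key : ∀ i : Fin k, ∑ y : Fin k → Bool, ∑ j, ε (y i) * ε (y j) = (2:ℝ)^k := by
      intro i
      rw [Finset.sum_comm]
      have : ∀ j : Fin k, ∑ y : Fin k → Bool, ε (y i) * ε (y j)
          = (if i = j then (2:ℝ)^k else 0) := by
        intro j
        by_cases hij : i = j
        · subst hij; simpa [hε] using sign_sq (k := k) i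
        · simpa [hij, hε] using sign_orth i j hij
      simp only [this]
      simp
    calc ∑ i : Fin k, ∑ y : Fin k → Bool, ∑ j, ε (y i) * ε (y j)
        = ∑ _i : Fin k, (2:ℝ)^k := Finset.sum_congr rfl fun i _ => key i
      _ = (2:ℝ)^k * k := by simp [mul_comm]
  -- Cauchy-Schwarz on the averages
  have card2 : ((Finset.univ : Finset (Fin k → Bool)).card : ℝ) = (2:ℝ)^k := by
    simp [Finset.card_univ]
  have hN : (0:ℝ) < (2:ℝ)^k := by positivity
  have CS : ∀ f : (Fin k → Bool) → ℝ, (∀ y, 0 ≤ f y) →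
      (∑ y : Fin k → Bool, f y ^ 2) ≤ (2:ℝ)^k * k →
      ∑ y : Fin k → Bool, f y ≤ (2:ℝ)^k * Real.sqrt k := by
    intro f hf hsum
    have h1 : (∑ y : Fin k → Bool, f y)^2 ≤ ((2:ℝ)^k)^2 * k := by
      calc (∑ y : Fin k → Bool, f y)^2
          ≤ ((Finset.univ : Finset (Fin k → Bool)).card : ℝ) * ∑ y : Fin k → Bool, f y ^ 2 :=
            sq_sum_le_card_mul_sum_sq
        _ ≤ (2:ℝ)^k * ((2:ℝ)^k * k) := by rw [card2]; exact mul_le_mul_of_nonneg_left hsum hN.le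
        _ = ((2:ℝ)^k)^2 * k := by ring
    have h2 : (0:ℝ) ≤ ∑ y : Fin k → Bool, f y := Finset.sum_nonneg fun y _ => hf y
    have h3 : ((2:ℝ)^k * Real.sqrt k)^2 = ((2:ℝ)^k)^2 * k := by
      rw [mul_pow]
      rw [Real.sq_sqrt (Nat.cast_nonneg k)]
    have h4 : (0:ℝ) ≤ (2:ℝ)^k * Real.sqrt k := by positivity
    nlinarith [h1, h2, h3, h4]
  have hF := CS (fun y => ‖S y‖) (fun y => norm_nonneg _) sumS2
  have hG := CS (fun y => |T y|) (fun y => abs_nonneg _) (by simpa [sq_abs] using sumT2)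
  -- combine
  have total : (2:ℝ)^k * ((k:ℝ) * γ) ≤ R * ((2:ℝ)^k * Real.sqrt k)
      + 2 * R * ((2:ℝ)^k * Real.sqrt k) := by
    calc (2:ℝ)^k * ((k:ℝ) * γ) = ∑ _y : Fin k → Bool, (k:ℝ) * γ := by
          simp [Finset.card_univ]
      _ ≤ ∑ y : Fin k → Bool, (R * ‖S y‖ + 2 * R * |T y|) :=
          Finset.sum_le_sum fun y _ => step1 y
      _ = R * (∑ y : Fin k → Bool, ‖S y‖) + 2 * R * (∑ y : Fin k → Bool, |T y|) := by
          rw [Finset.sum_add_distrib, Finset.mul_sum, Finset.mul_sum]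
      _ ≤ R * ((2:ℝ)^k * Real.sqrt k) + 2 * R * ((2:ℝ)^k * Real.sqrt k) := by
          gcongr
  have := (mul_le_mul_iff_right₀ hN).mp (by linarith [total] : (2:ℝ)^k * ((k:ℝ) * γ) ≤ (2:ℝ)^k * (3 * R * Real.sqrt k))
  linarith
end
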